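/- For each N there exists a solution (φ_N, H̄_N) of the weak KAM equation on the lattice: 𝓗_N(x, (−Δ_N)φ_N(x)) = H̄_N for all x ∈ Λ_N. Moreover it can be obtained as a limit: there is a sequence λ_k → 0 such that λ_k φ_{N,λ_k} → −H̄_N uniformly on Λ_N and φ_{N,λ_k}(·) − φ_{N,λ_k}(z) → φ_N(·) pointwise, where φ_{N,λ} solves λφ_{N,λ} + 𝓗_N(x, (−Δ_N)φ_{N,λ}) = 0 and z ∈ Λ_N is fixed. -/

import Mathlib

open scoped BigOperators RealInnerProductSpace
open MeasureTheory Filter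

noncomputable section

abbrev Evec (d : ℕ) := EuclideanSpace ℝ (Fin d)

def sgnz (a : ℝ) : ℤ := if 0 < a then 1 else if a < 0 then -1 else 0

def latE (d N : ℕ) (x : Fin d → ZMod N) : Evec d :=
  (WithLp.equiv 2 (Fin d → ℝ)).symm fun i => ((x i).val : ℝ) / N

def dplus {d N : ℕ} (φ : (Fin d → ZMod N) → ℝ) (x : Fin d → ZMod N) (i : Fin d) : ℝ :=
  (N : ℝ) * (φ (x + Pi.single i 1) - φ x)

def dminus {d N : ℕ} (φ : (Fin d → ZMod N) → ℝ) (x : Fin d → ZMod N) (i : Fin d) : ℝ :=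
  (N : ℝ) * (φ (x - Pi.single i 1) - φ x)

def DeltaN {d N : ℕ} (φ : (Fin d → ZMod N) → ℝ) (x : Fin d → ZMod N) : Fin d → ℝ × ℝ :=
  fun i => (dplus φ x i, dminus φ x i)

def negDeltaN {d N : ℕ} (φ : (Fin d → ZMod N) → ℝ) (x : Fin d → ZMod N) : Fin d → ℝ × ℝ :=
  fun i => (-dplus φ x i, -dminus φ x i)

def pairL {d : ℕ} (ξ : Fin d → ℝ × ℝ) (v : Evec d) : ℝ :=
  ∑ i, ((ξ i).1 * max (v i) 0 + (ξ i).2 * max (-(v i)) 0)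

def QN {d N : ℕ} (v : Evec d) (x y : Fin d → ZMod N) : ℝ :=
  (∑ i, if y = x + Pi.single i ((sgnz (v i) : ZMod N)) then (N : ℝ) * |v i| else 0)
    - (if y = x then (N : ℝ) * ∑ i, |v i| else 0)

def HNlat {d N : ℕ} (L : Evec d → Evec d → ℝ) (x : Fin d → ZMod N)
    (ξ : Fin d → ℝ × ℝ) : ℝ :=
  ⨆ v : Evec d, (pairL ξ v - L (latE d N x) v)

/-! Superlinearity of `L` makes `𝓗_N(x, ·)` a finite-valued supremum of affine functions of `ξ`, hence
convex and continuous. Testing the discounted equation with `v = 0`, and at a minimum point of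
`φ_λ`, gives `g 0 ≤ λ φ_λ ≤ L(·, 0)`; testing it with `v = ±eᵢ` bounds the discrete gradient
`N |φ_λ(x + eᵢ) - φ_λ(x)|` uniformly in `λ`, and since the `eᵢ` generate `Λ_N` the oscillation of
`φ_λ` is bounded uniformly in `λ`. A box in the finite-dimensional space of pairs of lattice
functions is compact, so `(λ φ_λ, φ_λ - φ_λ(z))` converges along some `λ_k → 0`. Since
`λ_k (φ_{λ_k}(x) - φ_{λ_k}(z)) → 0`, the limit of `λ_k φ_{λ_k}` is a constant `-H̄_N`, and the
equation passes to the limit because `-Δ_N` ignores additive constants. -/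

open Set

def UniformlySuperlinear {d : ℕ} (L : Evec d → Evec d → ℝ) (g : ℝ → ℝ) : Prop :=
  ∀ a : ℝ, 0 ≤ a → ∀ (x v : Evec d), a * ‖v‖ + g a ≤ L x v

lemma pairL_le_mul_norm {d : ℕ} (ξ : Fin d → ℝ × ℝ) (v : Evec d) :
    pairL ξ v ≤ (∑ i, (|(ξ i).1| + |(ξ i).2|)) * ‖v‖ := by
  rw [pairL, Finset.sum_mul]
  refine Finset.sum_le_sum fun i _ => ?_
  have hv : |v i| ≤ ‖v‖ := PiLp.norm_apply_le v i
  have h₁ : max (v i) 0 ≤ ‖v‖ := (max_le (le_abs_self _) (abs_nonneg _)).trans hv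
  have h₂ : max (-v i) 0 ≤ ‖v‖ := (max_le (neg_le_abs _) (abs_nonneg _)).trans hv
  have key : ∀ a m : ℝ, 0 ≤ m → m ≤ ‖v‖ → a * m ≤ |a| * ‖v‖ := fun a m hm hmv =>
    (mul_le_mul_of_nonneg_right (le_abs_self a) hm).trans
      (mul_le_mul_of_nonneg_left hmv (abs_nonneg a))
  rw [add_mul]
  exact add_le_add (key _ _ (le_max_right _ _) h₁) (key _ _ (le_max_right _ _) h₂)

lemma pairL_smul_add_smul {d : ℕ} (a b : ℝ) (p q : Fin d → ℝ × ℝ) (v : Evec d) :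
    pairL (a • p + b • q) v = a * pairL p v + b * pairL q v := by
  simp only [pairL, Finset.mul_sum, ← Finset.sum_add_distrib]
  refine Finset.sum_congr rfl fun i _ => ?_
  simp only [Pi.add_apply, Pi.smul_apply, Prod.fst_add, Prod.snd_add, Prod.smul_fst,
    Prod.smul_snd, smul_eq_mul]
  ring

lemma pairL_nonpos {d : ℕ} {ξ : Fin d → ℝ × ℝ} (hξ : ∀ i, (ξ i).1 ≤ 0 ∧ (ξ i).2 ≤ 0)
    (v : Evec d) : pairL ξ v ≤ 0 :=
  Finset.sum_nonpos fun i _ =>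
    add_nonpos (mul_nonpos_of_nonpos_of_nonneg (hξ i).1 (le_max_right _ _))
      (mul_nonpos_of_nonpos_of_nonneg (hξ i).2 (le_max_right _ _))

lemma pairL_zero {d : ℕ} (ξ : Fin d → ℝ × ℝ) : pairL ξ (0 : Evec d) = 0 := by
  simp [pairL]

lemma pairL_single_one {d : ℕ} (ξ : Fin d → ℝ × ℝ) (i : Fin d) :
    pairL ξ (EuclideanSpace.single i 1) = (ξ i).1 := by
  rw [pairL, Finset.sum_eq_single i (fun j _ hj => by simp [hj]) (by simp)]
  simp

lemma pairL_neg_single_one {d : ℕ} (ξ : Fin d → ℝ × ℝ) (i : Fin d) :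
    pairL ξ (-EuclideanSpace.single i 1) = (ξ i).2 := by
  rw [pairL, Finset.sum_eq_single i (fun j _ hj => by simp [hj]) (by simp)]
  simp

section Hamiltonian

variable {d N : ℕ} {L : Evec d → Evec d → ℝ} {g : ℝ → ℝ}

lemma le_HNlat (hsl : UniformlySuperlinear L g)
    (x : Fin d → ZMod N) (ξ : Fin d → ℝ × ℝ) (v : Evec d) :
    pairL ξ v - L (latE d N x) v ≤ HNlat L x ξ := by
  refine le_ciSup (f := fun v => pairL ξ v - L (latE d N x) v)
    ⟨-g (∑ i, (|(ξ i).1| + |(ξ i).2|)), ?_⟩ v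
  rintro _ ⟨w, rfl⟩
  have := hsl (∑ i, (|(ξ i).1| + |(ξ i).2|)) (by positivity) (latE d N x) w
  dsimp only
  linarith [pairL_le_mul_norm ξ w]

lemma HNlat_le_neg_of_nonpos (hsl : UniformlySuperlinear L g)
    (x : Fin d → ZMod N) {ξ : Fin d → ℝ × ℝ} (hξ : ∀ i, (ξ i).1 ≤ 0 ∧ (ξ i).2 ≤ 0) :
    HNlat L x ξ ≤ -g 0 :=
  ciSup_le fun v => by
    have := hsl 0 le_rfl (latE d N x) v
    linarith [pairL_nonpos hξ v]

lemma convexOn_HNlat (hsl : UniformlySuperlinear L g)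
    (x : Fin d → ZMod N) : ConvexOn ℝ univ (HNlat L x) := by
  refine ⟨convex_univ, fun p _ q _ a b ha hb hab => ciSup_le fun v => ?_⟩
  have hp := mul_le_mul_of_nonneg_left (le_HNlat hsl x p v) ha
  have hq := mul_le_mul_of_nonneg_left (le_HNlat hsl x q v) hb
  have hL : L (latE d N x) v = a * L (latE d N x) v + b * L (latE d N x) v := by
    rw [← add_mul, hab, one_mul]
  rw [pairL_smul_add_smul, smul_eq_mul, smul_eq_mul]
  linarith

lemma continuous_HNlat (hsl : UniformlySuperlinear L g)
    (x : Fin d → ZMod N) : Continuous (HNlat L x) :=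
  (convexOn_HNlat hsl x).locallyLipschitz.continuous

end Hamiltonian

section Lattice

variable {d N : ℕ}

lemma continuous_negDeltaN (x : Fin d → ZMod N) :
    Continuous fun φ : (Fin d → ZMod N) → ℝ => negDeltaN φ x := by
  unfold negDeltaN dplus dminus
  fun_prop

lemma negDeltaN_sub_const (φ : (Fin d → ZMod N) → ℝ) (c : ℝ) (x : Fin d → ZMod N) :
    negDeltaN (fun y => φ y - c) x = negDeltaN φ x := by
  ext i <;> simp [negDeltaN, dplus, dminus]

lemma negDeltaN_nonpos_of_forall_le {φ : (Fin d → ZMod N) → ℝ} {x₀ : Fin d → ZMod N}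
    (hx₀ : ∀ y, φ x₀ ≤ φ y) (i : Fin d) :
    (negDeltaN φ x₀ i).1 ≤ 0 ∧ (negDeltaN φ x₀ i).2 ≤ 0 := by
  simp only [negDeltaN, dplus, dminus, neg_nonpos]
  exact ⟨mul_nonneg N.cast_nonneg (sub_nonneg.2 (hx₀ _)),
    mul_nonneg N.cast_nonneg (sub_nonneg.2 (hx₀ _))⟩

lemma mem_closure_range_single_one [NeZero N] (c : Fin d → ZMod N) :
    c ∈ AddSubmonoid.closure (range fun i => (Pi.single i 1 : Fin d → ZMod N)) := by
  rw [← Finset.univ_sum_single c]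
  refine AddSubmonoid.sum_mem _ fun i _ => ?_
  have : Pi.single i (c i) = (c i).val • (Pi.single i 1 : Fin d → ZMod N) := by
    rw [← Pi.single_smul, nsmul_one, ZMod.natCast_zmod_val]
  rw [this]
  exact AddSubmonoid.nsmul_mem _ (AddSubmonoid.subset_closure (mem_range_self i)) _

end Lattice

lemma exists_abs_sub_le_of_mem_closure {G ι : Type*} [AddMonoid G] {s : Set G}
    (f : ι → G → ℝ) (hs : ∀ a ∈ s, ∃ K, ∀ i y, |f i (y + a) - f i y| ≤ K) {c : G}
    (hc : c ∈ AddSubmonoid.closure s) : ∃ K, ∀ i y, |f i (y + c) - f i y| ≤ K := by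
  induction hc using AddSubmonoid.closure_induction with
  | mem a ha => exact hs a ha
  | zero => exact ⟨0, fun i y => by simp⟩
  | add a b _ _ ha hb =>
    obtain ⟨Ka, hKa⟩ := ha
    obtain ⟨Kb, hKb⟩ := hb
    refine ⟨Kb + Ka, fun i y => ?_⟩
    calc |f i (y + (a + b)) - f i y|
        ≤ |f i (y + a + b) - f i (y + a)| + |f i (y + a) - f i y| := by
          rw [← add_assoc]; exact abs_sub_le _ _ _
      _ ≤ Kb + Ka := add_le_add (hKb i _) (hKa i y)

section Discounted

variable {d N : ℕ} {L : Evec d → Evec d → ℝ} {g : ℝ → ℝ} {lam : ℝ}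
  {φ : (Fin d → ZMod N) → ℝ}

lemma mul_le_L_zero_of_discounted (hsl : UniformlySuperlinear L g)
    (hφ : ∀ x, lam * φ x + HNlat L x (negDeltaN φ x) = 0) (x : Fin d → ZMod N) :
    lam * φ x ≤ L (latE d N x) 0 := by
  have := le_HNlat hsl x (negDeltaN φ x) 0
  rw [pairL_zero] at this
  linarith [hφ x]

lemma g_zero_le_mul_of_discounted [NeZero N]
    (hsl : UniformlySuperlinear L g) (hlam : 0 ≤ lam)
    (hφ : ∀ x, lam * φ x + HNlat L x (negDeltaN φ x) = 0) (x : Fin d → ZMod N) :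
    g 0 ≤ lam * φ x := by
  obtain ⟨x₀, hx₀⟩ := Finite.exists_min φ
  have := HNlat_le_neg_of_nonpos hsl x₀ (negDeltaN_nonpos_of_forall_le hx₀)
  have := mul_le_mul_of_nonneg_left (hx₀ x) hlam
  linarith [hφ x₀]

lemma neg_dplus_le_of_discounted [NeZero N]
    (hsl : UniformlySuperlinear L g) (hlam : 0 ≤ lam)
    (hφ : ∀ x, lam * φ x + HNlat L x (negDeltaN φ x) = 0) (x : Fin d → ZMod N) (i : Fin d) :
    -dplus φ x i ≤ -g 0 + L (latE d N x) (EuclideanSpace.single i 1) := by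
  have := le_HNlat hsl x (negDeltaN φ x) (EuclideanSpace.single i 1)
  rw [pairL_single_one] at this
  simp only [negDeltaN] at this
  linarith [hφ x, g_zero_le_mul_of_discounted hsl hlam hφ x]

lemma neg_dminus_le_of_discounted [NeZero N]
    (hsl : UniformlySuperlinear L g) (hlam : 0 ≤ lam)
    (hφ : ∀ x, lam * φ x + HNlat L x (negDeltaN φ x) = 0) (x : Fin d → ZMod N) (i : Fin d) :
    -dminus φ x i ≤ -g 0 + L (latE d N x) (-EuclideanSpace.single i 1) := by
  have := le_HNlat hsl x (negDeltaN φ x) (-EuclideanSpace.single i 1)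
  rw [pairL_neg_single_one] at this
  simp only [negDeltaN] at this
  linarith [hφ x, g_zero_le_mul_of_discounted hsl hlam hφ x]

end Discounted

lemma HNlat_eq_of_vanishing_discount {d N : ℕ} {L : Evec d → Evec d → ℝ} {g : ℝ → ℝ}
    (hsl : UniformlySuperlinear L g)
    {lk : ℕ → ℝ} (hlk : Tendsto lk atTop (nhds 0)) {φ : ℕ → (Fin d → ZMod N) → ℝ}
    (hφ : ∀ k x, lk k * φ k x + HNlat L x (negDeltaN (φ k) x) = 0) (z : Fin d → ZMod N)
    {a b : (Fin d → ZMod N) → ℝ} (ha : Tendsto (fun k y => lk k * φ k y) atTop (nhds a))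
    (hb : Tendsto (fun k y => φ k y - φ k z) atTop (nhds b)) :
    (∀ x, a x = a z) ∧ ∀ x, HNlat L x (negDeltaN b x) = -a z := by
  have hconst : ∀ x, a x = a z := by
    intro x
    have h := (tendsto_pi_nhds.1 ha z).add (hlk.mul (tendsto_pi_nhds.1 hb x))
    rw [zero_mul, add_zero] at h
    exact tendsto_nhds_unique (tendsto_pi_nhds.1 ha x) (h.congr fun k => by ring)
  refine ⟨hconst, fun x => ?_⟩
  rw [← hconst x]
  have hH : Tendsto (fun k => HNlat L x (negDeltaN (φ k) x)) atTop
      (nhds (HNlat L x (negDeltaN b x))) :=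
    ((((continuous_HNlat hsl x).comp (continuous_negDeltaN x)).tendsto b).comp hb).congr
      fun k => by simp [negDeltaN_sub_const]
  exact tendsto_nhds_unique hH ((tendsto_pi_nhds.1 ha x).neg.congr fun k => by linarith [hφ k x])

section VanishingDiscount

variable {d N : ℕ} [NeZero N] {L : Evec d → Evec d → ℝ} {g : ℝ → ℝ}

lemma exists_abs_step_le_of_discounted (hsl : UniformlySuperlinear L g)
    (φl : ℝ → (Fin d → ZMod N) → ℝ)
    (hsol : ∀ lam : ℝ, 0 < lam → ∀ x, lam * φl lam x + HNlat L x (negDeltaN (φl lam) x) = 0)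
    (i : Fin d) :
    ∃ K, ∀ (lam : Ioi (0 : ℝ)) y, |φl lam (y + Pi.single i 1) - φl lam y| ≤ K := by
  obtain ⟨C, hC⟩ := Finite.bddAbove_range fun y : Fin d → ZMod N =>
    max (L (latE d N y) (EuclideanSpace.single i 1))
      (L (latE d N y) (-EuclideanSpace.single i 1))
  have hN : (0 : ℝ) < N := by exact_mod_cast Nat.pos_of_ne_zero (NeZero.ne N)
  refine ⟨(-g 0 + C) / N, fun lam y => ?_⟩
  have h₁ := neg_dplus_le_of_discounted hsl lam.2.le (hsol lam lam.2) y i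
  have h₂ := neg_dminus_le_of_discounted hsl lam.2.le (hsol lam lam.2) (y + Pi.single i 1) i
  have hC₁ := le_of_max_le_left (hC ⟨y, rfl⟩)
  have hC₂ := le_of_max_le_right (hC ⟨y + Pi.single i 1, rfl⟩)
  simp only [dplus, dminus, add_sub_cancel_right] at h₁ h₂
  rw [le_div_iff₀ hN, ← abs_of_pos hN, ← abs_mul, abs_le]
  constructor <;> linarith

lemma exists_abs_sub_le_of_discounted (hsl : UniformlySuperlinear L g)
    (φl : ℝ → (Fin d → ZMod N) → ℝ)
    (hsol : ∀ lam : ℝ, 0 < lam → ∀ x, lam * φl lam x + HNlat L x (negDeltaN (φl lam) x) = 0)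
    (x z : Fin d → ZMod N) :
    ∃ K, ∀ lam, 0 < lam → |φl lam x - φl lam z| ≤ K := by
  obtain ⟨K, hK⟩ := exists_abs_sub_le_of_mem_closure (fun lam : Ioi (0 : ℝ) => φl lam)
    (by rintro _ ⟨i, rfl⟩; exact exists_abs_step_le_of_discounted hsl φl hsol i)
    (mem_closure_range_single_one (x - z))
  exact ⟨K, fun lam hlam => by simpa using hK ⟨lam, hlam⟩ z⟩

end VanishingDiscount

theorem stmt12_general (d N : ℕ) [NeZero N] (L : Evec d → Evec d → ℝ) (g : ℝ → ℝ)
    (hsl : ∀ a : ℝ, 0 ≤ a → ∀ (x v : Evec d), a * ‖v‖ + g a ≤ L x v)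
    (φl : ℝ → (Fin d → ZMod N) → ℝ)
    (hsol : ∀ lam : ℝ, 0 < lam →
      ∀ x, lam * φl lam x + HNlat L x (negDeltaN (φl lam) x) = 0)
    (z : Fin d → ZMod N) :
    ∃ (lk : ℕ → ℝ) (φN : (Fin d → ZMod N) → ℝ) (HbarN : ℝ),
      (∀ k, 0 < lk k) ∧ Tendsto lk atTop (nhds 0) ∧
      (∀ x, HNlat L x (negDeltaN φN x) = HbarN) ∧
      (∀ x, Tendsto (fun k => lk k * φl (lk k) x) atTop (nhds (-HbarN))) ∧
      (∀ x, Tendsto (fun k => φl (lk k) x - φl (lk k) z) atTop (nhds (φN x))) := by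
  choose K hK using fun x => exists_abs_sub_le_of_discounted hsl φl hsol x z
  set μ : ℕ → ℝ := fun k => 1 / (k + 1)
  have hμ : ∀ k, 0 < μ k := fun k => Nat.one_div_pos_of_nat
  have hS : IsCompact ((univ.pi fun x => Icc (g 0) (L (latE d N x) 0)) ×ˢ
      (univ.pi fun x => Icc (-K x) (K x))) :=
    (isCompact_univ_pi fun _ => isCompact_Icc).prod (isCompact_univ_pi fun _ => isCompact_Icc)
  obtain ⟨⟨a, b⟩, -, σ, hσ, hlim⟩ := hS.tendsto_subseq
    (x := fun k => (fun x => μ k * φl (μ k) x, fun x => φl (μ k) x - φl (μ k) z))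
    fun k => ⟨fun x _ => ⟨g_zero_le_mul_of_discounted hsl (hμ k).le (hsol _ (hμ k)) x,
      mul_le_L_zero_of_discounted hsl (hsol _ (hμ k)) x⟩, fun x _ => abs_le.1 (hK x _ (hμ k))⟩
  have hlk : Tendsto (μ ∘ σ) atTop (nhds 0) :=
    tendsto_one_div_add_atTop_nhds_zero_nat.comp hσ.tendsto_atTop
  have ha : Tendsto (fun k y => (μ ∘ σ) k * φl ((μ ∘ σ) k) y) atTop (nhds a) := hlim.fst_nhds
  have hb : Tendsto (fun k y => φl ((μ ∘ σ) k) y - φl ((μ ∘ σ) k) z) atTop (nhds b) :=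
    hlim.snd_nhds
  obtain ⟨hconst, hcell⟩ :=
    HNlat_eq_of_vanishing_discount hsl hlk (fun k => hsol _ (hμ _)) z ha hb
  refine ⟨μ ∘ σ, b, -a z, fun k => hμ _, hlk, hcell, fun x => ?_, tendsto_pi_nhds.1 hb⟩
  rw [neg_neg, ← hconst x]
  exact tendsto_pi_nhds.1 ha x

/-- existence of a solution of the weak KAM equation on the lattice,
obtained as a vanishing-discount limit: given the solutions `φ_{N,λ}` of the
discounted Bellman equations, there are `λ_k → 0`, `φ_N` and `H̄_N` with
`𝓗_N(x, (−Δ_N)φ_N(x)) = H̄_N`, `λ_k φ_{N,λ_k} → −H̄_N` uniformly on (the finite set)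
`Λ_N` and `φ_{N,λ_k}(·) − φ_{N,λ_k}(z) → φ_N(·)` pointwise. -/
theorem stmt12 (d N : ℕ) [NeZero N] (L : Evec d → Evec d → ℝ) (g : ℝ → ℝ)
    (hLc : Continuous (Function.uncurry L))
    (hconv : ∀ x : Evec d, ConvexOn ℝ Set.univ (L x))
    (hsl : ∀ a : ℝ, 0 ≤ a → ∀ (x v : Evec d), a * ‖v‖ + g a ≤ L x v)
    (φl : ℝ → (Fin d → ZMod N) → ℝ)
    (hsol : ∀ lam : ℝ, 0 < lam →
      ∀ x, lam * φl lam x + HNlat L x (negDeltaN (φl lam) x) = 0)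
    (z : Fin d → ZMod N) :
    ∃ (lk : ℕ → ℝ) (φN : (Fin d → ZMod N) → ℝ) (HbarN : ℝ),
      (∀ k, 0 < lk k) ∧ Tendsto lk atTop (nhds 0) ∧
      (∀ x, HNlat L x (negDeltaN φN x) = HbarN) ∧
      (∀ x, Tendsto (fun k => lk k * φl (lk k) x) atTop (nhds (-HbarN))) ∧
      (∀ x, Tendsto (fun k => φl (lk k) x - φl (lk k) z) atTop (nhds (φN x))) :=
  stmt12_general d N L g hsl φl hsol z
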